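/- The maximizer over w ≥ 0 of the likelihood f(r | q, μ_g(w); w), where r = μ_g(w)·q + n with n ~ CN(0, σ_n² I) and μ_g(w) = (√c/(1+(1+w²)c))·ζ/√M, is ŵ = √( [ ζ / ((r†q/(q†q))·√(cM)) − (1 + 1/c) ]⁺ ), where [x]⁺ = max{0, x}. -/

import Mathlib

/-!
Since `r†q = ρ` is real, `‖r - t q‖² = ‖q‖² (t - ρ/‖q‖²)² + const` for real `t`, so maximising the
likelihood means bringing the gain `μ_g(w)` as close as possible to `p = ρ/‖q‖²`. Writing
`μ_g(w) = k / (1 + 1/c + w²)` with `k = ζ/√(cM)`, the gain decreases from `μ_g(0)` to `0` on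
`w ≥ 0`: it hits `p` exactly at `w² = k/p - (1 + 1/c)` when that is nonnegative, and otherwise the
best choice is `w = 0`.
-/

open MeasureTheory ProbabilityTheory Filter

noncomputable instance (M : ℕ) : MeasureSpace (EuclideanSpace ℂ (Fin M)) :=
  { toMeasurableSpace := inferInstance
    volume := Measure.map (WithLp.toLp 2) (volume : Measure (Fin M → ℂ)) }
instance (M : ℕ) : BorelSpace (EuclideanSpace ℂ (Fin M)) :=
  inferInstance
instance (M : ℕ) : PolishSpace (EuclideanSpace ℂ (Fin M)) :=
  inferInstance

/-- The circularly-symmetric complex Gaussian distribution `CN(μ, v)` on `ℂ`,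
given by the density `z ↦ (π v)⁻¹ exp(-|z-μ|²/v)` w.r.t. Lebesgue measure. -/
noncomputable def cn (μ : ℂ) (v : ℝ) : Measure ℂ :=
  volume.withDensity fun z =>
    ENNReal.ofReal ((Real.pi * v)⁻¹ * Real.exp (-‖z - μ‖ ^ 2 / v))

/-- The circularly-symmetric complex Gaussian distribution `CN(μ, v • I_M)` on `ℂ^M`. -/
noncomputable def cnVec (M : ℕ) (μ : EuclideanSpace ℂ (Fin M)) (v : ℝ) :
    Measure (EuclideanSpace ℂ (Fin M)) :=
  volume.withDensity fun x =>
    ENNReal.ofReal (((Real.pi * v) ^ M)⁻¹ * Real.exp (-‖x - μ‖ ^ 2 / v))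


theorem isMinOn_div_add_sq_sub_sq {k d p : ℝ} (hk : 0 ≤ k) (hp : 0 < p) :
    IsMinOn (fun w : ℝ => (k / (d + w ^ 2) - p) ^ 2) (Set.Ici 0)
      (Real.sqrt (max 0 (k / p - d))) := by
  intro w (hw : 0 ≤ w)
  rcases hk.eq_or_lt with rfl | hk
  · simp
  show (k / (d + _ ^ 2) - p) ^ 2 ≤ (k / (d + w ^ 2) - p) ^ 2
  rcases le_or_gt (k / p) d with hle | hlt
  · -- `k / (d + w ^ 2)` stays below `p`, so it is best at its maximum `w = 0`
    rw [max_eq_left (sub_nonpos.2 hle), Real.sqrt_zero]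
    have hd : 0 < d := (div_pos hk hp).trans_le hle
    have hgain_le : k / (d + w ^ 2) ≤ k / d :=
      div_le_div_of_nonneg_left hk.le hd (by nlinarith)
    have hgain0_le : k / d ≤ p := (div_le_iff₀ hd).2 (by rwa [div_le_iff₀ hp, mul_comm] at hle)
    rw [zero_pow two_ne_zero, add_zero]
    nlinarith [mul_nonneg (sub_nonneg.2 hgain_le) (sub_nonneg.2 (hgain0_le.trans' hgain_le))]
  · rw [max_eq_right (sub_pos.2 hlt).le, Real.sq_sqrt (sub_pos.2 hlt).le, add_sub_cancel,
      div_div_cancel₀ hk.ne', sub_self, zero_pow two_ne_zero]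
    exact sq_nonneg _

theorem norm_sub_ofReal_smul_sq {𝕜 E : Type*} [RCLike 𝕜] [NormedAddCommGroup E]
    [InnerProductSpace 𝕜 E] {r q : E} {ρ : ℝ} (hq : q ≠ 0) (hrq : RCLike.re (inner 𝕜 r q) = ρ)
    (t : ℝ) :
    ‖r - (t : 𝕜) • q‖ ^ 2 = ‖q‖ ^ 2 * (t - ρ / ‖q‖ ^ 2) ^ 2 + (‖r‖ ^ 2 - ρ ^ 2 / ‖q‖ ^ 2) := by
  have hq2 : ‖q‖ ^ 2 ≠ 0 := by positivity
  rw [@norm_sub_sq 𝕜, inner_smul_right, RCLike.re_ofReal_mul, hrq, norm_smul,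
    RCLike.norm_ofReal, mul_pow, sq_abs]
  field_simp
  ring

theorem sqrt_div_one_add_mul_mul_div_sqrt {c : ℝ} (hc : 0 < c) (ζ m w : ℝ) :
    Real.sqrt c / (1 + (1 + w ^ 2) * c) * (ζ / Real.sqrt m)
      = ζ / Real.sqrt (c * m) / (1 + 1 / c + w ^ 2) := by
  have hsc : Real.sqrt c ≠ 0 := (Real.sqrt_pos.2 hc).ne'
  have hden : 1 + (1 + w ^ 2) * c ≠ 0 := by positivity
  rw [Real.sqrt_mul hc.le]
  field_simp
  linear_combination (ζ * (1 + (1 + w ^ 2) * c) / Real.sqrt m) * Real.sq_sqrt hc.le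

theorem ml_estimator_of_pca_strength_general
    (M Nd : ℕ) (c ζ vn : ℝ) (hc : 0 < c) (hζ : 0 < ζ) (hvn : 0 < vn)
    (q r : EuclideanSpace ℂ (Fin Nd)) (hq : q ≠ 0)
    (ρ : ℝ) (hρ : 0 < ρ) (hrq : (inner ℂ r q : ℂ) = (ρ : ℝ))
    (μg : ℝ → ℝ)
    (hμg : μg = fun w => Real.sqrt c / (1 + (1 + w ^ 2) * c) * (ζ / Real.sqrt M))
    (what : ℝ)
    (hwhat : what = Real.sqrt
      (max 0 (ζ / ((ρ / ‖q‖ ^ 2) * Real.sqrt (c * M)) - (1 + 1 / c)))) :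
    IsMaxOn (fun w : ℝ => Real.exp (-‖r - ((μg w : ℝ) : ℂ) • q‖ ^ 2 / vn))
      (Set.Ici 0) what := by
  set p := ρ / ‖q‖ ^ 2
  set k := ζ / Real.sqrt (c * M)
  have hp : 0 < p := by have := norm_pos_iff.2 hq; positivity
  have hgain (w : ℝ) : μg w = k / (1 + 1 / c + w ^ 2) := by
    rw [hμg]
    exact sqrt_div_one_add_mul_mul_div_sqrt hc ζ M w
  have hrq_re : RCLike.re (inner ℂ r q) = ρ := by simp [hrq]
  have hmin := isMinOn_div_add_sq_sub_sq (d := 1 + 1 / c) (by positivity : 0 ≤ k) hp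
  have hexp_anti :
      Antitone fun x => Real.exp (-(‖q‖ ^ 2 * x + (‖r‖ ^ 2 - ρ ^ 2 / ‖q‖ ^ 2)) / vn) :=
    fun x y hxy => Real.exp_le_exp.2 (by gcongr)
  have hlik : (fun w : ℝ => Real.exp (-‖r - ((μg w : ℝ) : ℂ) • q‖ ^ 2 / vn))
      = (fun x => Real.exp (-(‖q‖ ^ 2 * x + (‖r‖ ^ 2 - ρ ^ 2 / ‖q‖ ^ 2)) / vn))
        ∘ fun w : ℝ => (k / (1 + 1 / c + w ^ 2) - p) ^ 2 := by
    funext w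
    rw [Function.comp_apply, ← RCLike.ofReal_eq_complex_ofReal,
      norm_sub_ofReal_smul_sq hq hrq_re, hgain]
  rw [hlik, hwhat, div_mul_eq_div_div_swap]
  exact hmin.comp_antitone hexp_anti

/-- closed-form approximate ML estimator of the PCA strength.
For the large-`M` Gaussian likelihood `w ↦ exp(−‖r − μ_g(w) q‖²/σ_n²)` with
`μ_g(w) = (√c/(1+(1+w²)c)) ζ/√M`, assuming `r†q > 0` (real), the maximizer over
`w ≥ 0` is `ŵ = √([ζ/((r†q/q†q)√(cM)) − (1+1/c)]⁺)`. -/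
theorem ml_estimator_of_pca_strength
    (M Nd : ℕ) (hM : 1 ≤ M) (c ζ vn : ℝ) (hc : 0 < c) (hζ : 0 < ζ) (hvn : 0 < vn)
    (q r : EuclideanSpace ℂ (Fin Nd)) (hq : q ≠ 0)
    (ρ : ℝ) (hρ : 0 < ρ) (hrq : (inner ℂ r q : ℂ) = (ρ : ℝ))
    (μg : ℝ → ℝ)
    (hμg : μg = fun w => Real.sqrt c / (1 + (1 + w ^ 2) * c) * (ζ / Real.sqrt M))
    (what : ℝ)
    (hwhat : what = Real.sqrt
      (max 0 (ζ / ((ρ / ‖q‖ ^ 2) * Real.sqrt (c * M)) - (1 + 1 / c)))) :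
    IsMaxOn (fun w : ℝ => Real.exp (-‖r - ((μg w : ℝ) : ℂ) • q‖ ^ 2 / vn))
      (Set.Ici 0) what :=
  ml_estimator_of_pca_strength_general M Nd c ζ vn hc hζ hvn q r hq ρ hρ hrq μg hμg what hwhat
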